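/- arXiv:2309.08013 — 2 statements merged into one kernel-verified Lean document; each statement's English description precedes it below -/
import Mathlib

section
/- Suppose real symmetric 3×3 matrices C1 and C2 satisfy the standing assumptions, with eigenvalues λ1 > λ2 > λ3 > 0 of C1⁻¹C2, and suppose ν = (ν1,ν2) satisfies ν2 > 0 and ν1 + λ3ν2 > 0. Then the pair (C1, C_ν) with C_ν = ν1C1 + ν2C2 also satisfies the standing assumptions; in particular the eigenvalues of C1⁻¹C_ν are ν1 + λᵢν2 (i = 1,2,3) and satisfy 0 < ν1+λ3ν2 < ν1+λ2ν2 < ν1+λ1ν2. -/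
/-!
The generalized eigenvectors `v₁, v₂, v₃` of the pencil (`C₁⁻¹ C₂ vᵢ = λᵢ vᵢ`) are pairwise
`C₁`- and `C₂`-orthogonal and form a basis, so in coordinates `u = Σ cᵢ vᵢ` the two forms are
`q₁ u = Σ aᵢ cᵢ²` and `q₂ u = Σ λᵢ aᵢ cᵢ²`. Since `det C₁ < 0`, the product of the `aᵢ` is negative,
and since `q₁` is positive somewhere, not all `aᵢ` are negative. (SA3) forbids `aᵢ < 0 < aⱼ` with
`λⱼ < λᵢ`, because a suitable combination of `vᵢ` and `vⱼ` would be `C₂`-null with `q₁ > 0`.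
Hence `a₁, a₂ ≥ 0`, and `q₂ - λ₃ q₁ = Σ (λᵢ - λ₃) aᵢ cᵢ²` is positive semidefinite. Writing
`q_ν = (ν₁ + λ₃ ν₂) q₁ + ν₂ (q₂ - λ₃ q₁)` gives positivity on the plane and (SA3) for `(C₁, C_ν)`,
while `C₁⁻¹ C_ν = ν₁ + ν₂ C₁⁻¹ C₂` has the shifted eigenvalues.
-/

open Matrix Polynomial

/-- Standing assumption (SA1): symmetric, positive definite upper-left 2×2 block,
negative determinant. -/
def SA1 (C : Matrix (Fin 3) (Fin 3) ℝ) : Prop :=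
  C.IsSymm ∧ (∀ x y : ℝ, (x, y) ≠ (0, 0) → 0 < ![x, y, 0] ⬝ᵥ C.mulVec ![x, y, 0]) ∧
    C.det < 0

namespace Matrix

variable {n : Type*} [Fintype n]

/-- (SA3) for the pair `(C₁, C₂)`. -/
def NegOnNullCone (C₁ C₂ : Matrix n n ℝ) : Prop :=
  ∀ u : n → ℝ, u ≠ 0 → u ⬝ᵥ C₂ *ᵥ u = 0 → u ⬝ᵥ C₁ *ᵥ u < 0

theorem IsSymm.dotProduct_mulVec_comm {R : Type*} [CommSemiring R] {C : Matrix n n R}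
    (hC : C.IsSymm) (u w : n → R) : u ⬝ᵥ C *ᵥ w = w ⬝ᵥ C *ᵥ u := by
  rw [dotProduct_mulVec, ← mulVec_transpose, hC.eq, dotProduct_comm]

theorem dotProduct_smul_add_smul_mulVec {R : Type*} [CommSemiring R] (C₁ C₂ : Matrix n n R)
    (a b : R) (u : n → R) :
    u ⬝ᵥ (a • C₁ + b • C₂) *ᵥ u = a * (u ⬝ᵥ C₁ *ᵥ u) + b * (u ⬝ᵥ C₂ *ᵥ u) := by
  simp only [add_mulVec, smul_mulVec, dotProduct_add, dotProduct_smul, smul_eq_mul]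

theorem smul_add_smul_dotProduct_mulVec {R : Type*} [CommRing R] (C : Matrix n n R)
    (v w : n → R) (s t : R) :
    (s • v + t • w) ⬝ᵥ C *ᵥ (s • v + t • w) =
      s ^ 2 * (v ⬝ᵥ C *ᵥ v) + s * t * (v ⬝ᵥ C *ᵥ w + w ⬝ᵥ C *ᵥ v) + t ^ 2 * (w ⬝ᵥ C *ᵥ w) := by
  simp only [mulVec_add, mulVec_smul, add_dotProduct, dotProduct_add, smul_dotProduct,
    dotProduct_smul, smul_eq_mul]
  ring

theorem IsSymm.dotProduct_mulVec_eq_zero_of_pencil {K : Type*} [Field K]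
    {C₁ C₂ : Matrix n n K} (h₁ : C₁.IsSymm) (h₂ : C₂.IsSymm) {l m : K} {v w : n → K}
    (hv : C₂ *ᵥ v = l • C₁ *ᵥ v) (hw : C₂ *ᵥ w = m • C₁ *ᵥ w) (hlm : l ≠ m) :
    v ⬝ᵥ C₁ *ᵥ w = 0 := by
  have h : l * (v ⬝ᵥ C₁ *ᵥ w) = m * (v ⬝ᵥ C₁ *ᵥ w) := by
    calc l * (v ⬝ᵥ C₁ *ᵥ w) = w ⬝ᵥ C₂ *ᵥ v := by
          rw [hv, dotProduct_smul, smul_eq_mul, h₁.dotProduct_mulVec_comm]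
      _ = m * (v ⬝ᵥ C₁ *ᵥ w) := by
          rw [h₂.dotProduct_mulVec_comm, hw, dotProduct_smul, smul_eq_mul]
  exact (mul_eq_zero.1 (by linear_combination h : (l - m) * (v ⬝ᵥ C₁ *ᵥ w) = 0)).resolve_left
    (sub_ne_zero.2 hlm)

section NegOnNullCone

variable {C₁ C₂ : Matrix n n ℝ}

theorem NegOnNullCone.dotProduct_mulVec_nonpos_of_pencil (hC : NegOnNullCone C₁ C₂)
    (h₁ : C₁.IsSymm) (h₂ : C₂.IsSymm) {l m : ℝ} {v w : n → ℝ} (hv : C₂ *ᵥ v = l • C₁ *ᵥ v)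
    (hw : C₂ *ᵥ w = m • C₁ *ᵥ w) (hml : m < l) (hm : 0 < m) (hneg : v ⬝ᵥ C₁ *ᵥ v < 0) :
    w ⬝ᵥ C₁ *ᵥ w ≤ 0 := by
  by_contra! hpos
  set a := v ⬝ᵥ C₁ *ᵥ v
  set b := w ⬝ᵥ C₁ *ᵥ w
  have hvw := h₁.dotProduct_mulVec_eq_zero_of_pencil h₂ hv hw hml.ne'
  have hwv := h₁.dotProduct_mulVec_eq_zero_of_pencil h₂ hw hv hml.ne
  have hs : √(m * b) ^ 2 = m * b := Real.sq_sqrt (by positivity)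
  have ht : √(-(l * a)) ^ 2 = -(l * a) := Real.sq_sqrt (by nlinarith)
  -- `u` is `C₂`-null: the weights balance `q₂ v = l a < 0` against `q₂ w = m b > 0`
  set u := √(m * b) • v + √(-(l * a)) • w
  have hq₁ : u ⬝ᵥ C₁ *ᵥ u = a * b * (m - l) := by
    rw [smul_add_smul_dotProduct_mulVec, hvw, hwv, hs, ht]
    ring
  have hq₂ : u ⬝ᵥ C₂ *ᵥ u = 0 := by
    rw [smul_add_smul_dotProduct_mulVec]
    simp only [hv, hw, dotProduct_smul, smul_eq_mul, hvw, hwv, hs, ht]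
    ring
  have hq₁pos : 0 < u ⬝ᵥ C₁ *ᵥ u :=
    hq₁ ▸ mul_pos_of_neg_of_neg (mul_neg_of_neg_of_pos hneg hpos) (sub_neg.2 hml)
  have hu : u ≠ 0 := fun h ↦ by simp [h] at hq₁pos
  exact (hC u hu hq₂).not_gt hq₁pos

theorem NegOnNullCone.smul_add_smul (hC : NegOnNullCone C₁ C₂) {m : ℝ}
    (hle : ∀ u, m * (u ⬝ᵥ C₁ *ᵥ u) ≤ u ⬝ᵥ C₂ *ᵥ u) {a b : ℝ} (hb : 0 < b) (hab : 0 < a + m * b) :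
    NegOnNullCone C₁ (a • C₁ + b • C₂) := by
  intro u hu hu₀
  rw [dotProduct_smul_add_smul_mulVec] at hu₀
  by_contra! hq₁
  have hq₁' : u ⬝ᵥ C₁ *ᵥ u = 0 := by
    refine le_antisymm (nonpos_of_mul_nonpos_right ?_ hab) hq₁
    linarith [mul_nonneg hb.le (sub_nonneg.2 (hle u))]
  have hq₂ : u ⬝ᵥ C₂ *ᵥ u = 0 := by
    rw [hq₁', mul_zero, zero_add] at hu₀
    exact (mul_eq_zero.1 hu₀).resolve_left hb.ne'
  exact (hC u hu hq₂).ne hq₁'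

end NegOnNullCone

variable [DecidableEq n]

section Orthogonal

variable {R : Type*} [CommRing R] (C : Matrix n n R) {v : n → n → R}

theorem of_mul_mul_transpose_eq_diagonal (hv : ∀ i j, i ≠ j → v i ⬝ᵥ C *ᵥ v j = 0) :
    of v * C * (of v)ᵀ = diagonal fun i ↦ v i ⬝ᵥ C *ᵥ v i := by
  ext i j
  rw [mul_apply', diagonal_apply]
  split_ifs with h
  · subst h; rw [dotProduct_mulVec]; rfl
  · rw [← hv i j h, dotProduct_mulVec]; rfl

theorem sq_det_of_mul_det_eq_prod (hv : ∀ i j, i ≠ j → v i ⬝ᵥ C *ᵥ v j = 0) :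
    (of v).det ^ 2 * C.det = ∏ i, v i ⬝ᵥ C *ᵥ v i := by
  rw [← det_diagonal, ← of_mul_mul_transpose_eq_diagonal C hv, det_mul, det_mul,
    det_transpose]
  ring

theorem exists_dotProduct_mulVec_eq_sum_sq (hv : ∀ i j, i ≠ j → v i ⬝ᵥ C *ᵥ v j = 0)
    (hunit : IsUnit (of v)) (u : n → R) :
    ∃ c : n → R, u ⬝ᵥ C *ᵥ u = ∑ i, c i ^ 2 * (v i ⬝ᵥ C *ᵥ v i) := by
  obtain ⟨c, rfl⟩ := vecMul_surjective_iff_isUnit.2 hunit u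
  refine ⟨c, ?_⟩
  calc c ᵥ* of v ⬝ᵥ C *ᵥ (c ᵥ* of v) = c ⬝ᵥ (of v * C * (of v)ᵀ) *ᵥ c := by
        rw [← mulVec_mulVec, ← mulVec_mulVec, mulVec_transpose, dotProduct_mulVec c (of v)]
    _ = ∑ i, c i ^ 2 * (v i ⬝ᵥ C *ᵥ v i) := by
      rw [of_mul_mul_transpose_eq_diagonal C hv]
      simp only [dotProduct, mulVec_diagonal]
      exact Finset.sum_congr rfl fun i _ ↦ by ring

end Orthogonal

variable {K : Type*} [Field K]

theorem det_eq_prod_of_charpoly_eq_prod {A : Matrix n n K} {l : n → K}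
    (hA : A.charpoly = ∏ i, (X - C (l i))) : A.det = ∏ i, l i := by
  rw [det_eq_sign_charpoly_coeff, hA, coeff_zero_eq_eval_zero, eval_prod]
  simp only [eval_sub, eval_X, eval_C, zero_sub, Finset.prod_neg, Finset.card_univ, ← mul_assoc,
    ← mul_pow]
  norm_num

theorem charpoly_smul_one_add_smul_of_charpoly_eq_prod [Infinite K] {A : Matrix n n K}
    {l : n → K} (hA : A.charpoly = ∏ i, (X - C (l i))) (a b : K) :
    (a • 1 + b • A).charpoly = ∏ i, (X - C (a + l i * b)) := by
  rcases eq_or_ne b 0 with rfl | hb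
  · simp [smul_one_eq_diagonal, charpoly_diagonal]
  refine Polynomial.funext fun t ↦ ?_
  have hshift : scalar n t - (a • 1 + b • A) = b • (scalar n ((t - a) / b) - A) := by
    ext i j
    rcases eq_or_ne i j with rfl | hij
    · simp only [scalar_apply, sub_apply, diagonal_apply_eq, add_apply, smul_apply, one_apply_eq,
        smul_eq_mul, mul_one]
      field_simp
      ring
    · simp [hij]
  rw [eval_charpoly, hshift, det_smul, ← eval_charpoly, hA, eval_prod, eval_prod,
    ← Finset.card_univ, ← Finset.prod_const, ← Finset.prod_mul_distrib]
  refine Finset.prod_congr rfl fun i _ ↦ ?_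
  simp only [eval_sub, eval_X, eval_C]
  field_simp
  ring

theorem exists_eigenbasis_of_charpoly_eq_prod {A : Matrix n n K} {l : n → K}
    (hl : Function.Injective l) (hA : A.charpoly = ∏ i, (X - C (l i))) :
    ∃ v : n → n → K, IsUnit (of v) ∧ ∀ i, A *ᵥ v i = l i • v i := by
  have hev : ∀ i, Module.End.HasEigenvalue (toLin' A) (l i) := fun i ↦ by
    rw [Module.End.hasEigenvalue_iff_isRoot_charpoly, charpoly_toLin', hA]
    exact (isRoot_prod _ _ _).2 ⟨i, Finset.mem_univ i, root_X_sub_C.2 rfl⟩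
  choose v hv using fun i ↦ (hev i).exists_hasEigenvector
  refine ⟨of v, ?_, fun i ↦ Module.End.mem_eigenspace_iff.1 (hv i).1⟩
  exact linearIndependent_rows_iff_isUnit.1
    (Module.End.eigenvectors_linearIndependent' _ l hl v hv)

section Pencil

variable {C₁ C₂ : Matrix n n K}

theorem IsSymm.exists_pencil_eigenbasis (h₁ : C₁.IsSymm) (h₂ : C₂.IsSymm) (hdet : C₁.det ≠ 0)
    {l : n → K} (hl : Function.Injective l) (hchar : (C₁⁻¹ * C₂).charpoly = ∏ i, (X - C (l i))) :
    ∃ v : n → n → K, IsUnit (of v) ∧ (∀ i, C₂ *ᵥ v i = l i • C₁ *ᵥ v i) ∧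
      ∀ i j, i ≠ j → v i ⬝ᵥ C₁ *ᵥ v j = 0 := by
  obtain ⟨v, hunit, hv⟩ := exists_eigenbasis_of_charpoly_eq_prod hl hchar
  have hpencil : ∀ i, C₂ *ᵥ v i = l i • C₁ *ᵥ v i := fun i ↦ by
    rw [← mulVec_smul, ← hv, mulVec_mulVec, ← mul_assoc,
      mul_nonsing_inv _ (isUnit_iff_ne_zero.2 hdet), one_mul]
  exact ⟨v, hunit, hpencil, fun i j hij ↦
    h₁.dotProduct_mulVec_eq_zero_of_pencil h₂ (hpencil i) (hpencil j) (hl.ne hij)⟩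

theorem charpoly_inv_mul_smul_add_smul [Infinite K] (hdet : C₁.det ≠ 0) {l : n → K}
    (hchar : (C₁⁻¹ * C₂).charpoly = ∏ i, (X - C (l i))) (a b : K) :
    (C₁⁻¹ * (a • C₁ + b • C₂)).charpoly = ∏ i, (X - C (a + l i * b)) := by
  rw [mul_add, Matrix.mul_smul, Matrix.mul_smul, nonsing_inv_mul _ (isUnit_iff_ne_zero.2 hdet)]
  exact charpoly_smul_one_add_smul_of_charpoly_eq_prod hchar a b

theorem det_smul_add_smul_of_charpoly_eq_prod [Infinite K] (hdet : C₁.det ≠ 0) {l : n → K}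
    (hchar : (C₁⁻¹ * C₂).charpoly = ∏ i, (X - C (l i))) (a b : K) :
    (a • C₁ + b • C₂).det = C₁.det * ∏ i, (a + l i * b) := by
  rw [← mul_nonsing_inv_cancel_left C₁ (a • C₁ + b • C₂) (isUnit_iff_ne_zero.2 hdet), det_mul,
    det_eq_prod_of_charpoly_eq_prod (charpoly_inv_mul_smul_add_smul hdet hchar a b)]

end Pencil

theorem dotProduct_mulVec_le_of_pencil_eigenbasis {C₁ C₂ : Matrix n n ℝ} {l : n → ℝ} {m : ℝ}
    {v : n → n → ℝ} (hunit : IsUnit (of v)) (hv : ∀ i, C₂ *ᵥ v i = l i • C₁ *ᵥ v i)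
    (horth : ∀ i j, i ≠ j → v i ⬝ᵥ C₁ *ᵥ v j = 0)
    (hnonneg : ∀ i, 0 ≤ (l i - m) * (v i ⬝ᵥ C₁ *ᵥ v i)) (u : n → ℝ) :
    m * (u ⬝ᵥ C₁ *ᵥ u) ≤ u ⬝ᵥ C₂ *ᵥ u := by
  have hD : ∀ i j, v i ⬝ᵥ (C₂ - m • C₁) *ᵥ v j = (l j - m) * (v i ⬝ᵥ C₁ *ᵥ v j) := fun i j ↦ by
    simp only [sub_mulVec, smul_mulVec, hv j, dotProduct_sub, dotProduct_smul, smul_eq_mul]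
    ring
  obtain ⟨c, hc⟩ := exists_dotProduct_mulVec_eq_sum_sq (C₂ - m • C₁)
    (fun i j hij ↦ by rw [hD, horth i j hij, mul_zero]) hunit u
  have hDu : 0 ≤ u ⬝ᵥ (C₂ - m • C₁) *ᵥ u := by
    rw [hc]
    exact Finset.sum_nonneg fun i _ ↦ mul_nonneg (sq_nonneg _) (hD i i ▸ hnonneg i)
  simpa [sub_mulVec, smul_mulVec, dotProduct_sub, dotProduct_smul] using hDu

end Matrix

theorem SA1.pencil_eigenbasis_nonneg {C1 C2 : Matrix (Fin 3) (Fin 3) ℝ} (hC1 : SA1 C1)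
    (hC2 : C2.IsSymm) (hSA3 : NegOnNullCone C1 C2) {l : Fin 3 → ℝ} (hl : StrictAnti l)
    (hl₂ : 0 < l 2) {v : Fin 3 → Fin 3 → ℝ} (hunit : IsUnit (of v))
    (hv : ∀ i, C2 *ᵥ v i = l i • C1 *ᵥ v i) (horth : ∀ i j, i ≠ j → v i ⬝ᵥ C1 *ᵥ v j = 0) :
    ∀ i, 0 ≤ (l i - l 2) * (v i ⬝ᵥ C1 *ᵥ v i) := by
  obtain ⟨hC1s, hC1p, hC1d⟩ := hC1
  set a : Fin 3 → ℝ := fun i ↦ v i ⬝ᵥ C1 *ᵥ v i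
  have hprod : a 0 * a 1 * a 2 < 0 := by
    have hdet : (of v).det ≠ 0 := (isUnit_iff_isUnit_det _).1 hunit |>.ne_zero
    rw [← Fin.prod_univ_three, ← sq_det_of_mul_det_eq_prod C1 horth]
    exact mul_neg_of_pos_of_neg (pow_two_pos_of_ne_zero hdet) hC1d
  have hsome : ¬ ∀ i, a i ≤ 0 := fun h ↦ by
    obtain ⟨c, hc⟩ := exists_dotProduct_mulVec_eq_sum_sq C1 horth hunit ![1, 0, 0]
    have hpos := hC1p 1 0 (by simp)
    rw [hc] at hpos
    exact hpos.not_ge <|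
      Finset.sum_nonpos fun i _ ↦ mul_nonpos_of_nonneg_of_nonpos (sq_nonneg _) (h i)
  have h01 : a 0 < 0 → a 1 ≤ 0 := hSA3.dotProduct_mulVec_nonpos_of_pencil hC1s hC2 (hv 0) (hv 1)
    (hl (by decide)) (hl₂.trans (hl (by decide)))
  have h12 : a 1 < 0 → a 2 ≤ 0 := hSA3.dotProduct_mulVec_nonpos_of_pencil hC1s hC2 (hv 1) (hv 2)
    (hl (by decide)) hl₂
  have ha₁ : 0 ≤ a 1 := by
    by_contra! ha₁
    have ha₁' := ha₁.le
    have ha₂ := h12 ha₁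
    have ha₀ : a 0 ≤ 0 := by
      by_contra! ha₀
      linarith [mul_nonneg ha₀.le (mul_nonneg_of_nonpos_of_nonpos ha₁' ha₂)]
    exact hsome fun i ↦ by fin_cases i <;> assumption
  have ha₀ : 0 ≤ a 0 := by
    by_contra! ha₀
    have : a 1 = 0 := le_antisymm (h01 ha₀) ha₁
    simp [this] at hprod
  intro i
  fin_cases i
  · exact mul_nonneg (sub_nonneg.2 (hl (by decide)).le) ha₀
  · exact mul_nonneg (sub_nonneg.2 (hl (by decide)).le) ha₁
  · simp

/-- for a valid parameter `ν`, the pair `(C1, C_ν)` with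
`C_ν = ν1 C1 + ν2 C2` again satisfies the standing assumptions, with eigenvalues
`ν1 + λᵢ ν2` of `C1⁻¹ C_ν` satisfying `0 < ν1+λ3ν2 < ν1+λ2ν2 < ν1+λ1ν2`. -/
theorem pencil_element_standing_assumptions (C1 C2 : Matrix (Fin 3) (Fin 3) ℝ)
    (l1 l2 l3 ν1 ν2 : ℝ)
    (hC1 : SA1 C1) (hC2 : SA1 C2)
    (h12 : l2 < l1) (h23 : l3 < l2) (h3 : 0 < l3)
    (hchar : (C1⁻¹ * C2).charpoly =
      (X - Polynomial.C l1) * (X - Polynomial.C l2) * (X - Polynomial.C l3))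
    (hSA3 : ∀ u : Fin 3 → ℝ, u ≠ 0 → u ⬝ᵥ C2.mulVec u = 0 → u ⬝ᵥ C1.mulVec u < 0)
    (hν2 : 0 < ν2) (hν : 0 < ν1 + l3 * ν2) :
    let Cν := ν1 • C1 + ν2 • C2
    SA1 Cν ∧
    (C1⁻¹ * Cν).charpoly =
      (X - Polynomial.C (ν1 + l1 * ν2)) * (X - Polynomial.C (ν1 + l2 * ν2)) *
        (X - Polynomial.C (ν1 + l3 * ν2)) ∧
    0 < ν1 + l3 * ν2 ∧ ν1 + l3 * ν2 < ν1 + l2 * ν2 ∧ ν1 + l2 * ν2 < ν1 + l1 * ν2 ∧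
    (∀ u : Fin 3 → ℝ, u ≠ 0 → u ⬝ᵥ Cν.mulVec u = 0 → u ⬝ᵥ C1.mulVec u < 0) := by
  intro Cν
  set l : Fin 3 → ℝ := ![l1, l2, l3]
  have hl : StrictAnti l := Fin.strictAnti_iff_succ_lt.2 fun i ↦ by fin_cases i <;> simpa [l]
  have hcharl : (C1⁻¹ * C2).charpoly = ∏ i, (X - C (l i)) := by
    simpa [l, Fin.prod_univ_three] using hchar
  obtain ⟨hC1s, hC1p, hC1d⟩ := id hC1
  obtain ⟨v, hunit, hv, horth⟩ :=
    hC1s.exists_pencil_eigenbasis hC2.1 hC1d.ne hl.injective hcharl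
  have hle : ∀ u, l3 * (u ⬝ᵥ C1 *ᵥ u) ≤ u ⬝ᵥ C2 *ᵥ u := dotProduct_mulVec_le_of_pencil_eigenbasis
    hunit hv horth (hC1.pencil_eigenbasis_nonneg hC2.1 hSA3 hl h3 hunit hv horth)
  have hν₂ : ν1 + l3 * ν2 < ν1 + l2 * ν2 := by nlinarith
  have hν₁ : ν1 + l2 * ν2 < ν1 + l1 * ν2 := by nlinarith
  refine ⟨⟨(hC1s.smul ν1).add (hC2.1.smul ν2), fun x y hxy ↦ ?_, ?_⟩, ?_, hν, hν₂, hν₁,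
    NegOnNullCone.smul_add_smul hSA3 hle hν2 hν⟩
  · rw [dotProduct_smul_add_smul_mulVec]
    linarith [mul_pos hν (hC1p x y hxy), mul_nonneg hν2.le (sub_nonneg.2 (hle ![x, y, 0]))]
  · rw [det_smul_add_smul_of_charpoly_eq_prod hC1d.ne hcharl, Fin.prod_univ_three]
    exact mul_neg_of_neg_of_pos hC1d
      (mul_pos (mul_pos (hν.trans (hν₂.trans hν₁)) (hν.trans hν₂)) hν)
  · simpa [l, Fin.prod_univ_three] using charpoly_inv_mul_smul_add_smul hC1d.ne hcharl ν1 ν2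
end

section
/- Let λ1 > λ2 > λ3 > 0, e = √((λ1−λ2)/(λ1−λ3)), and let ν = (ν1,ν2) satisfy ν2 > 0 and ν1 + λ3ν2 > 0. Define the dual parameter ν̄ = (−λ3ν1 + (λ1λ2 − λ1λ3 − λ2λ3)ν2, ν1 + λ3ν2). Then ν̄ also satisfies ν̄2 > 0 and ν̄1 + λ3ν̄2 > 0; the double dual satisfies ν̄̄ = δν with δ = (λ1−λ3)(λ2−λ3) > 0; and the rotation numbers ρ(ν) = F(arcsin √((λ1−λ3)ν2/(λ1ν2+ν1)), e)/(2K(e)) and ρ(ν̄) (defined analogously) satisfy ρ(ν) + ρ(ν̄) = 1/2. -/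
open Real

/-- Incomplete elliptic integral of the first kind `F(φ,e)`. -/
noncomputable def ellF (φ e : ℝ) : ℝ :=
  ∫ τ in (0:ℝ)..φ, 1 / Real.sqrt (1 - e ^ 2 * Real.sin τ ^ 2)

/-- Complete elliptic integral of the first kind `K(e)`. -/
noncomputable def ellK (e : ℝ) : ℝ := ellF (Real.pi / 2) e

/-!
Write `Δ(t) = √(1 - e² sin² t)`. The complementary amplitude `t̄`, given by
`sin t̄ = cos t / Δ(t)`, maps `[0, π/2]` onto itself reversing orientation, and
`Δ(t̄) = √(1 - e²) / Δ(t)`, `dt̄/dt = -√(1 - e²) / Δ(t)²`; hence `dt̄ / Δ(t̄) = -dt / Δ(t)`, and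
substituting gives `F(ω, e) + F(ω̄, e) = K(e)`. For the amplitude `sin² ω = x` of `ν` one gets
`sin² ω̄ = (1 - x) / (1 - e² x)`, which is exactly the amplitude of the dual parameter `ν̄`.
Dividing by `2K(e)` gives `ρ(ν) + ρ(ν̄) = 1/2`.
-/

section ComplementaryAmplitude

variable {e : ℝ}

lemma one_sub_sq_mul_sin_sq_pos (he : e ^ 2 < 1) (t : ℝ) : 0 < 1 - e ^ 2 * sin t ^ 2 := by
  nlinarith [sin_sq_le_one t, sq_nonneg e]

lemma continuous_ellF_integrand (he : e ^ 2 < 1) :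
    Continuous fun τ : ℝ => 1 / √(1 - e ^ 2 * sin τ ^ 2) :=
  continuous_const.div (by fun_prop) fun τ => (sqrt_pos.2 (one_sub_sq_mul_sin_sq_pos he τ)).ne'

lemma ellK_pos (he : e ^ 2 < 1) : 0 < ellK e :=
  intervalIntegral.intervalIntegral_pos_of_pos
    ((continuous_ellF_integrand he).intervalIntegrable _ _)
    (fun τ => one_div_pos.2 (sqrt_pos.2 (one_sub_sq_mul_sin_sq_pos he τ))) (by positivity)

lemma ellF_add_integral_eq_ellK (he : e ^ 2 < 1) (φ : ℝ) :
    ellF φ e + ∫ τ in φ..π / 2, 1 / √(1 - e ^ 2 * sin τ ^ 2) = ellK e :=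
  intervalIntegral.integral_add_adjacent_intervals
    ((continuous_ellF_integrand he).intervalIntegrable _ _)
    ((continuous_ellF_integrand he).intervalIntegrable _ _)

noncomputable def complementaryAmplitude (e φ : ℝ) : ℝ :=
  arcsin (cos φ / √(1 - e ^ 2 * sin φ ^ 2))

lemma one_sub_sq_cos_div_sqrt (he : e ^ 2 < 1) (t : ℝ) :
    1 - (cos t / √(1 - e ^ 2 * sin t ^ 2)) ^ 2 =
      (1 - e ^ 2) * sin t ^ 2 / (1 - e ^ 2 * sin t ^ 2) := by
  have hD := one_sub_sq_mul_sin_sq_pos he t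
  rw [div_pow, sq_sqrt hD.le]
  field_simp
  linear_combination -sin_sq_add_cos_sq t

lemma sin_complementaryAmplitude (he : e ^ 2 < 1) (t : ℝ) :
    sin (complementaryAmplitude e t) = cos t / √(1 - e ^ 2 * sin t ^ 2) := by
  have hsq : (cos t / √(1 - e ^ 2 * sin t ^ 2)) ^ 2 ≤ 1 := by
    have hrhs : 0 ≤ (1 - e ^ 2) * sin t ^ 2 / (1 - e ^ 2 * sin t ^ 2) :=
      div_nonneg (mul_nonneg (by linarith) (sq_nonneg _)) (one_sub_sq_mul_sin_sq_pos he t).le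
    linarith [one_sub_sq_cos_div_sqrt he t]
  obtain ⟨hlo, hhi⟩ := abs_le.1 (sq_le_one_iff_abs_le_one _ |>.1 hsq)
  exact sin_arcsin hlo hhi

lemma one_sub_sq_mul_sin_sq_complementaryAmplitude (he : e ^ 2 < 1) (t : ℝ) :
    1 - e ^ 2 * sin (complementaryAmplitude e t) ^ 2 = (1 - e ^ 2) / (1 - e ^ 2 * sin t ^ 2) := by
  have hD := one_sub_sq_mul_sin_sq_pos he t
  rw [sin_complementaryAmplitude he, div_pow, sq_sqrt hD.le]
  field_simp
  linear_combination -e ^ 2 * sin_sq_add_cos_sq t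

lemma hasDerivAt_cos_div_sqrt (he : e ^ 2 < 1) (t : ℝ) :
    HasDerivAt (fun s => cos s / √(1 - e ^ 2 * sin s ^ 2))
      (-((1 - e ^ 2) * sin t) / ((1 - e ^ 2 * sin t ^ 2) * √(1 - e ^ 2 * sin t ^ 2))) t := by
  have hD := one_sub_sq_mul_sin_sq_pos he t
  have hD' : HasDerivAt (fun s => 1 - e ^ 2 * sin s ^ 2) (-(e ^ 2 * (2 * sin t * cos t))) t := by
    simpa using (((hasDerivAt_sin t).pow 2).const_mul (e ^ 2)).const_sub 1
  refine ((hasDerivAt_cos t).div (hD'.sqrt hD.ne') (sqrt_pos.2 hD).ne').congr_deriv ?_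
  have hsq : √(1 - sin t ^ 2 * e ^ 2) ^ 2 = 1 - sin t ^ 2 * e ^ 2 := sq_sqrt (by linarith)
  rw [sq_sqrt hD.le]
  field_simp
  rw [hsq]
  linear_combination
    sin t * e ^ 2 / ((1 - sin t ^ 2 * e ^ 2) * √(1 - sin t ^ 2 * e ^ 2)) * sin_sq_add_cos_sq t

lemma hasDerivAt_complementaryAmplitude (he : e ^ 2 < 1) {t : ℝ} (ht : 0 < sin t) :
    HasDerivAt (complementaryAmplitude e) (-√(1 - e ^ 2) / (1 - e ^ 2 * sin t ^ 2)) t := by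
  have hD := one_sub_sq_mul_sin_sq_pos he t
  have hE : 0 < 1 - e ^ 2 := by linarith
  have h1 := one_sub_sq_cos_div_sqrt he t
  have hpos : 0 < 1 - (cos t / √(1 - e ^ 2 * sin t ^ 2)) ^ 2 := by rw [h1]; positivity
  have hne : cos t / √(1 - e ^ 2 * sin t ^ 2) ≠ -1 ∧ cos t / √(1 - e ^ 2 * sin t ^ 2) ≠ 1 := by
    constructor <;> rintro h <;> rw [h] at hpos <;> norm_num at hpos
  refine ((hasDerivAt_arcsin hne.1 hne.2).comp t (hasDerivAt_cos_div_sqrt he t)).congr_deriv ?_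
  rw [h1, sqrt_div' _ hD.le, sqrt_mul hE.le, sqrt_sq ht.le]
  field_simp
  rw [sq_sqrt hE.le]

lemma integral_eq_ellF_complementaryAmplitude (he : e ^ 2 < 1) {ω : ℝ} (hω0 : 0 < ω)
    (hωπ : ω ≤ π / 2) :
    ∫ τ in ω..π / 2, 1 / √(1 - e ^ 2 * sin τ ^ 2) = ellF (complementaryAmplitude e ω) e := by
  have hE : 0 < 1 - e ^ 2 := by linarith
  have hsin : ∀ t ∈ Set.uIcc ω (π / 2), 0 < sin t := by
    rw [Set.uIcc_of_le hωπ]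
    exact fun t ht => sin_pos_of_pos_of_lt_pi (hω0.trans_le ht.1) (by linarith [ht.2, pi_pos])
  have hsubst := intervalIntegral.integral_comp_mul_deriv
    (fun t ht => hasDerivAt_complementaryAmplitude he (hsin t ht))
    (Continuous.continuousOn (continuous_const.div (by fun_prop)
      fun t => (one_sub_sq_mul_sin_sq_pos he t).ne'))
    (continuous_ellF_integrand he)
  have hend : complementaryAmplitude e (π / 2) = 0 := by simp [complementaryAmplitude]
  rw [hend, intervalIntegral.integral_symm 0] at hsubst
  rw [ellF, ← neg_neg (∫ τ in 0..complementaryAmplitude e ω, _), ← hsubst,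
    ← intervalIntegral.integral_neg]
  refine intervalIntegral.integral_congr fun t _ => ?_
  have hD := one_sub_sq_mul_sin_sq_pos he t
  simp only [Function.comp_apply, one_sub_sq_mul_sin_sq_complementaryAmplitude he,
    sqrt_div' _ hD.le]
  field_simp
  rw [sq_sqrt hD.le]

theorem ellF_add_ellF_complementaryAmplitude (he : e ^ 2 < 1) {ω : ℝ} (hω0 : 0 ≤ ω)
    (hωπ : ω ≤ π / 2) :
    ellF ω e + ellF (complementaryAmplitude e ω) e = ellK e := by
  rcases hω0.eq_or_lt with rfl | hω0
  · simp [ellF, ellK, complementaryAmplitude]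
  · rw [← integral_eq_ellF_complementaryAmplitude he hω0 hωπ, ellF_add_integral_eq_ellK he]

lemma complementaryAmplitude_arcsin_sqrt (he : e ^ 2 < 1) {x : ℝ} (hx0 : 0 ≤ x) (hx1 : x ≤ 1) :
    complementaryAmplitude e (arcsin √x) = arcsin √((1 - x) / (1 - e ^ 2 * x)) := by
  have hsx : √x ≤ 1 := sqrt_le_one.2 hx1
  rw [complementaryAmplitude, sin_arcsin (by linarith [sqrt_nonneg x]) hsx, cos_arcsin,
    sq_sqrt hx0, sqrt_div' _ (by nlinarith [sq_nonneg e])]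

end ComplementaryAmplitude

lemma dual_amplitude_ratio {l1 l2 l3 ν1 ν2 : ℝ} (h12 : l2 < l1) (h23 : l3 < l2) (hν2 : 0 < ν2)
    (hν : 0 < ν1 + l3 * ν2) :
    (1 - (l1 - l3) * ν2 / (l1 * ν2 + ν1)) /
        (1 - (l1 - l2) / (l1 - l3) * ((l1 - l3) * ν2 / (l1 * ν2 + ν1))) =
      (l1 - l3) * (ν1 + l3 * ν2) /
        (l1 * (ν1 + l3 * ν2) + (-l3 * ν1 + (l1 * l2 - l1 * l3 - l2 * l3) * ν2)) := by
  have h13 : l1 - l3 ≠ 0 := by linarith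
  have hA : l1 * ν2 + ν1 ≠ 0 := by nlinarith
  have hB : ν1 + l2 * ν2 ≠ 0 := by nlinarith
  rw [show l1 * (ν1 + l3 * ν2) + (-l3 * ν1 + (l1 * l2 - l1 * l3 - l2 * l3) * ν2) =
    (l1 - l3) * (ν1 + l2 * ν2) by ring]
  field_simp
  ring

theorem dual_parameters_general (l1 l2 l3 ν1 ν2 : ℝ)
    (h12 : l2 < l1) (h23 : l3 < l2)
    (hν2 : 0 < ν2) (hν : 0 < ν1 + l3 * ν2) :
    let e := Real.sqrt ((l1 - l2) / (l1 - l3))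
    let ρ := fun a b : ℝ =>
      ellF (Real.arcsin (Real.sqrt ((l1 - l3) * b / (l1 * b + a)))) e / (2 * ellK e)
    let d1 := -l3 * ν1 + (l1 * l2 - l1 * l3 - l2 * l3) * ν2
    let d2 := ν1 + l3 * ν2
    (0 < d2 ∧ 0 < d1 + l3 * d2) ∧
    (-l3 * d1 + (l1 * l2 - l1 * l3 - l2 * l3) * d2, d1 + l3 * d2) =
      ((l1 - l3) * (l2 - l3) * ν1, (l1 - l3) * (l2 - l3) * ν2) ∧
    0 < (l1 - l3) * (l2 - l3) ∧
    ρ ν1 ν2 + ρ d1 d2 = 1 / 2 := by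
  intro e ρ d1 d2
  have hδ : 0 < (l1 - l3) * (l2 - l3) := mul_pos (by linarith) (by linarith)
  have he2 : e ^ 2 = (l1 - l2) / (l1 - l3) := sq_sqrt (div_nonneg (by linarith) (by linarith))
  have he1 : e ^ 2 < 1 := by rw [he2, div_lt_one (by linarith)]; linarith
  refine ⟨⟨hν, ?_⟩, by simp only [d1, d2, Prod.mk.injEq]; constructor <;> ring, hδ, ?_⟩
  · rw [show d1 + l3 * d2 = (l1 - l3) * (l2 - l3) * ν2 by ring]
    exact mul_pos hδ hν2
  set x := (l1 - l3) * ν2 / (l1 * ν2 + ν1)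
  have hx0 : 0 ≤ x := div_nonneg (by nlinarith) (by nlinarith)
  have hx1 : x ≤ 1 := div_le_one_of_le₀ (by linarith) (by nlinarith)
  have hdual :
      arcsin √((l1 - l3) * d2 / (l1 * d2 + d1)) = complementaryAmplitude e (arcsin √x) := by
    rw [complementaryAmplitude_arcsin_sqrt he1 hx0 hx1, he2, dual_amplitude_ratio h12 h23 hν2 hν]
  show ellF (arcsin √x) e / (2 * ellK e) + ellF (arcsin √_) e / (2 * ellK e) = 1 / 2
  rw [hdual, ← add_div, ellF_add_ellF_complementaryAmplitude he1 (arcsin_nonneg.2 (sqrt_nonneg x))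
    (arcsin_le_pi_div_two _)]
  field_simp [(ellK_pos he1).ne']

/-- Dual parameters: the dual parameter `ν̄` of a valid parameter
`ν` is valid, the double dual is `δν` with `δ = (λ1−λ3)(λ2−λ3) > 0`, and the
rotation numbers satisfy `ρ(ν) + ρ(ν̄) = 1/2`. -/
theorem dual_parameters (l1 l2 l3 ν1 ν2 : ℝ)
    (h12 : l2 < l1) (h23 : l3 < l2) (h3 : 0 < l3)
    (hν2 : 0 < ν2) (hν : 0 < ν1 + l3 * ν2) :
    let e := Real.sqrt ((l1 - l2) / (l1 - l3))
    let ρ := fun a b : ℝ =>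
      ellF (Real.arcsin (Real.sqrt ((l1 - l3) * b / (l1 * b + a)))) e / (2 * ellK e)
    let d1 := -l3 * ν1 + (l1 * l2 - l1 * l3 - l2 * l3) * ν2
    let d2 := ν1 + l3 * ν2
    (0 < d2 ∧ 0 < d1 + l3 * d2) ∧
    (-l3 * d1 + (l1 * l2 - l1 * l3 - l2 * l3) * d2, d1 + l3 * d2) =
      ((l1 - l3) * (l2 - l3) * ν1, (l1 - l3) * (l2 - l3) * ν2) ∧
    0 < (l1 - l3) * (l2 - l3) ∧
    ρ ν1 ν2 + ρ d1 d2 = 1 / 2 :=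
  dual_parameters_general l1 l2 l3 ν1 ν2 h12 h23 hν2 hν
end
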